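/- The set S⁰ = {(s,t,u) ∈ ℝ³ : 0 < s < 1, 0 < u, u < t, t < 1 − u, (1−t)² − su > 0, t² − (1−s)u > 0, (1−2s)(1−2t+tu−su) = 0} equals the union C ∪ D, where C = {(s,t,u) ∈ ℝ³ : 0 < t < 1, 0 < u < 2t², u < 2(1−t)², 1 − 2s = 0} and D = {(s,t,u) ∈ ℝ³ : 0 < s < 1, 0 < u < 1/2, (1−u)² − su > 0, (1−u)² − (1−s)u > 0, 1 − 2t + tu − su = 0}. -/
import Mathlib


/-- The semialgebraic set S⁰, with coordinates (s, t, u) ∈ ℝ³. -/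
def Szero : Set (ℝ × ℝ × ℝ) :=
  {p | 0 < p.1 ∧ p.1 < 1 ∧ 0 < p.2.2 ∧ p.2.2 < p.2.1 ∧ p.2.1 < 1 - p.2.2 ∧
    (1 - p.2.1) ^ 2 - p.1 * p.2.2 > 0 ∧ p.2.1 ^ 2 - (1 - p.1) * p.2.2 > 0 ∧
    (1 - 2 * p.1) * (1 - 2 * p.2.1 + p.2.1 * p.2.2 - p.1 * p.2.2) = 0}

/-- The component C of S⁰ lying on the hypersurface 1 − 2s = 0. -/
def Cpiece : Set (ℝ × ℝ × ℝ) :=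
  {p | 0 < p.2.1 ∧ p.2.1 < 1 ∧ 0 < p.2.2 ∧ p.2.2 < 2 * p.2.1 ^ 2 ∧
    p.2.2 < 2 * (1 - p.2.1) ^ 2 ∧ 1 - 2 * p.1 = 0}

/-- The component D of S⁰ lying on the hypersurface 1 − 2t + tu − su = 0. -/
def Dpiece : Set (ℝ × ℝ × ℝ) :=
  {p | 0 < p.1 ∧ p.1 < 1 ∧ 0 < p.2.2 ∧ p.2.2 < 1/2 ∧
    (1 - p.2.2) ^ 2 - p.1 * p.2.2 > 0 ∧
    (1 - p.2.2) ^ 2 - (1 - p.1) * p.2.2 > 0 ∧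
    1 - 2 * p.2.1 + p.2.1 * p.2.2 - p.1 * p.2.2 = 0}

/-- The decomposition S⁰ = C ∪ D. -/
theorem Szero_eq_union : Szero = Cpiece ∪ Dpiece := by
  ext ⟨s, t, u⟩
  simp only [Szero, Cpiece, Dpiece, Set.mem_setOf_eq, Set.mem_union]
  constructor
  · rintro ⟨hs, hs1, hu, hut, htu, h1, h2, hprod⟩
    rcases mul_eq_zero.mp hprod with h | h
    · exact Or.inl ⟨by linarith, by linarith, hu, by nlinarith, by nlinarith, h⟩
    · refine Or.inr ⟨hs, hs1, hu, by linarith, ?_, ?_, h⟩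
      · nlinarith [mul_pos (sub_pos.mpr hut) (by linarith : (0:ℝ) < 2 - t - u)]
      · nlinarith [mul_pos (by linarith : (0:ℝ) < 1 - u - t) (by linarith : (0:ℝ) < 1 - u + t)]
  · rintro (⟨ht, ht1, hu, h1, h2, hs⟩ | ⟨hs, hs1, hu, hu2, h1, h2, ht⟩)
    · have hs' : s = 1 / 2 := by linarith
      subst hs'
      have haux : u < t ∧ u < 1 - t := by
        rcases le_or_gt t (1 / 2) with hc | hc
        · have : 2 * t ^ 2 ≤ t := by nlinarith
          constructor <;> linarith
        · have : 2 * (1 - t) ^ 2 ≤ 1 - t := by nlinarith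
          constructor <;> linarith
      refine ⟨by norm_num, by norm_num, hu, haux.1, by linarith [haux.2], by linarith,
        by linarith, by ring⟩
    · have h2u : (0:ℝ) < 2 - u := by linarith
      have key : t * (2 - u) = 1 - s * u := by linarith [ht]
      have hsu1 : s * u < 1 := by nlinarith
      have hsu1' : (1 - s) * u < 1 := by nlinarith
      have hut : u < t := by nlinarith [mul_pos h2u h2u]
      have htu : t < 1 - u := by nlinarith
      refine ⟨hs, hs1, hu, hut, htu, ?_, ?_, by rw [ht, mul_zero]⟩
      · have e : ((1 - t) * (2 - u)) ^ 2 - s * u * (2 - u) ^ 2 =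
            (1 - s * u) * ((1 - u) ^ 2 - s * u) := by
          have : (1 - t) * (2 - u) = 1 - u + s * u := by nlinarith [key]
          rw [this]; ring
        nlinarith [mul_pos (by linarith : (0:ℝ) < 1 - s * u) h1, mul_pos h2u h2u]
      · have e : (t * (2 - u)) ^ 2 - (1 - s) * u * (2 - u) ^ 2 =
            (1 - (1 - s) * u) * ((1 - u) ^ 2 - (1 - s) * u) := by
          rw [key]; ring
        nlinarith [mul_pos (by linarith : (0:ℝ) < 1 - (1 - s) * u) h2, mul_pos h2u h2u]
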